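/- Among all matrices W ∈ ℝ^{d×m} satisfying Wᵀg = 0, the ridge objective J(W) = ‖Y − XW‖_F² + λ‖W‖_F² is minimized by W* = W̃ − A⁻¹g(gᵀA⁻¹g)⁻¹gᵀW̃, where A = XᵀX + λI and W̃ = A⁻¹XᵀY. -/

import Mathlib

open Matrix

/-- Squared Frobenius norm, `‖M‖_F² = tr(MᵀM)`. -/
def frobSq {n m : ℕ} (M : Matrix (Fin n) (Fin m) ℝ) : ℝ := Matrix.trace (Mᵀ * M)

/-!
`J` is a quadratic with Hessian `A = XᵀX + λI`, so
`J (W* + D) = J W* + 2 tr (Dᵀ (A W* - XᵀY)) + tr (Dᵀ A D)`.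
The gradient `A W* - XᵀY = -(gᵀA⁻¹g)⁻¹ g gᵀ W̃` has all its columns along `g`, so the cross term
vanishes for every feasible direction (`Dᵀ g = 0`), and `tr (Dᵀ A D) ≥ 0`.
-/

section

variable {p q R : Type*} [Fintype p] [CommRing R]

theorem Matrix.trace_transpose_mul_comm [Fintype q] (M N : Matrix p q R) :
    trace (Mᵀ * N) = trace (Nᵀ * M) := by
  rw [← trace_transpose, transpose_mul, transpose_transpose]

theorem Matrix.transpose_mul_vecMulVec_mul_mulVec (B : Matrix p p R) (g : p → R)
    (W : Matrix p q R) :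
    (B * vecMulVec g g * W)ᵀ *ᵥ g = (g ⬝ᵥ B *ᵥ g) • (Wᵀ *ᵥ g) := by
  rw [mul_vecMulVec, vecMulVec_mul, transpose_vecMulVec, vecMulVec_mulVec,
    op_smul_eq_smul, dotProduct_comm, mulVec_transpose]

theorem Matrix.trace_transpose_mul_mul_self_nonneg [Fintype q] [PartialOrder R] [StarRing R]
    [TrivialStar R] [AddLeftMono R] {A : Matrix p p R} (hA : A.PosSemidef) (M : Matrix p q R) :
    0 ≤ trace (Mᵀ * A * M) := by
  simpa only [conjTranspose_eq_transpose_of_trivial] using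
    (hA.conjTranspose_mul_mul_same M).trace_nonneg

end

theorem Matrix.posDef_transpose_mul_self_add_smul_one {n d : Type*} [Fintype n] [Fintype d]
    [DecidableEq d] (X : Matrix n d ℝ) {lam : ℝ} (hlam : 0 < lam) :
    (Xᵀ * X + lam • (1 : Matrix d d ℝ)).PosDef := by
  simpa only [conjTranspose_eq_transpose_of_trivial] using
    PosDef.posSemidef_add (posSemidef_conjTranspose_mul_self X) (PosDef.one.smul hlam)

section

variable {n d m : ℕ}

theorem frobSq_add (M N : Matrix (Fin n) (Fin m) ℝ) :
    frobSq (M + N) = frobSq M + 2 * trace (Nᵀ * M) + frobSq N := by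
  simp only [frobSq, transpose_add, Matrix.add_mul, Matrix.mul_add, trace_add,
    trace_transpose_mul_comm M N]
  ring

theorem frobSq_sub (M N : Matrix (Fin n) (Fin m) ℝ) :
    frobSq (M - N) = frobSq M - 2 * trace (Nᵀ * M) + frobSq N := by
  simp only [frobSq, transpose_sub, Matrix.sub_mul, Matrix.mul_sub, trace_sub,
    trace_transpose_mul_comm M N]
  ring

theorem ridge_objective_add (X : Matrix (Fin n) (Fin d) ℝ) (Y : Matrix (Fin n) (Fin m) ℝ)
    (lam : ℝ) (V D : Matrix (Fin d) (Fin m) ℝ) :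
    frobSq (Y - X * (V + D)) + lam * frobSq (V + D) =
      frobSq (Y - X * V) + lam * frobSq V
        + 2 * trace (Dᵀ * ((Xᵀ * X + lam • 1) * V - Xᵀ * Y))
        + trace (Dᵀ * (Xᵀ * X + lam • 1) * D) := by
  rw [Matrix.mul_add, ← sub_sub, frobSq_sub, frobSq_add]
  simp only [frobSq, transpose_mul, Matrix.mul_sub, Matrix.mul_add, Matrix.add_mul,
    Matrix.mul_smul, Matrix.smul_mul, Matrix.one_mul, trace_sub, trace_add, trace_smul,
    smul_eq_mul, Matrix.mul_assoc]
  ring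

end

theorem constrained_ridge_minimizer (n d m : ℕ)
    (X : Matrix (Fin n) (Fin d) ℝ) (Y : Matrix (Fin n) (Fin m) ℝ)
    (lam : ℝ) (hlam : 0 < lam)
    (g : Fin d → ℝ) (hg : g ≠ 0)
    (A : Matrix (Fin d) (Fin d) ℝ)
    (hA : A = Xᵀ * X + lam • (1 : Matrix (Fin d) (Fin d) ℝ))
    (J : Matrix (Fin d) (Fin m) ℝ → ℝ)
    (hJ : ∀ W, J W = frobSq (Y - X * W) + lam * frobSq W)
    (Wt : Matrix (Fin d) (Fin m) ℝ) (hWt : Wt = A⁻¹ * Xᵀ * Y)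
    (Wstar : Matrix (Fin d) (Fin m) ℝ)
    (hWstar : Wstar = Wt - (g ⬝ᵥ (A⁻¹ *ᵥ g))⁻¹ • (A⁻¹ * Matrix.vecMulVec g g * Wt)) :
    Wstarᵀ *ᵥ g = 0 ∧ ∀ W, Wᵀ *ᵥ g = 0 → J Wstar ≤ J W := by
  have hApd : A.PosDef := hA ▸ posDef_transpose_mul_self_add_smul_one X hlam
  have hs : g ⬝ᵥ (A⁻¹ *ᵥ g) ≠ 0 := (hApd.inv.dotProduct_mulVec_pos hg).ne'
  have hAinv : A * A⁻¹ = 1 := mul_nonsing_inv A ((isUnit_iff_isUnit_det A).mp hApd.isUnit)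
  have hfeas : Wstarᵀ *ᵥ g = 0 := by
    rw [hWstar, transpose_sub, transpose_smul, sub_mulVec, smul_mulVec,
      transpose_mul_vecMulVec_mul_mulVec, smul_smul, inv_mul_cancel₀ hs, one_smul, sub_self]
  have hgrad : A * Wstar - Xᵀ * Y = -((g ⬝ᵥ (A⁻¹ *ᵥ g))⁻¹ • (vecMulVec g g * Wt)) := by
    rw [hWstar, hWt, Matrix.mul_sub, Matrix.mul_smul]
    simp only [← Matrix.mul_assoc, hAinv, Matrix.one_mul]
    abel
  refine ⟨hfeas, fun W hW => ?_⟩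
  obtain ⟨D, rfl⟩ : ∃ D, W = Wstar + D := ⟨W - Wstar, by abel⟩
  have hD : Dᵀ *ᵥ g = 0 := by simpa [transpose_add, add_mulVec, hfeas] using hW
  have hcross : trace (Dᵀ * (A * Wstar - Xᵀ * Y)) = 0 := by
    rw [hgrad, Matrix.mul_neg, Matrix.mul_smul, ← Matrix.mul_assoc, mul_vecMulVec, hD,
      zero_vecMulVec, Matrix.zero_mul, smul_zero, neg_zero, trace_zero]
  rw [hJ, hJ, ridge_objective_add, ← hA, hcross]
  linarith [trace_transpose_mul_mul_self_nonneg hApd.posSemidef D]
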